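/- Let $r \geq 2$, let $H$ be a finite graph with no copy of the complete $r$-partite graph $K_{t,\dots,t}$ ($r$ parts of size $t$). Then $\mathrm{ind}_{\mathbb{Z}_r} \|\mathrm{Hom}(K_r, H)\| \leq (\binom{r}{2}+1)(t-1) - 1$, where $\mathrm{Hom}(K_r,H)$ is the order complex of the poset $\mathrm{Hom}_p(K_r,H)$ with the free cyclic-shift $\mathbb{Z}_r$-action. -/

import Mathlib

/-- The geometric realization of the order complex of a finite poset. -/
abbrev Realization (P : Type*) [PartialOrder P] [Fintype P] : Type _ :=
  {w : P → ℝ // (∀ x, 0 ≤ w x) ∧ (∑ x, w x) = 1 ∧ IsChain (· ≤ ·) {x | w x ≠ 0}}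

/-- The poset `Hom_p(K_r, H)`: tuples (indexed by `ZMod r`) of nonempty subsets of
`V(H)` with all cross-edges between distinct coordinates. -/
def KrHom (r : ℕ) {V : Type*} [DecidableEq V] (H : SimpleGraph V) : Type _ :=
  {A : ZMod r → Finset V //
    (∀ i, (A i).Nonempty) ∧
    ∀ i j, i ≠ j → ∀ x ∈ A i, ∀ y ∈ A j, H.Adj x y}

instance (r : ℕ) {V : Type*} [DecidableEq V] (H : SimpleGraph V) :
    PartialOrder (KrHom r H) where
  le A B := ∀ i, A.val i ⊆ B.val i
  le_refl A i := subset_rfl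
  le_trans A B C hAB hBC i := (hAB i).trans (hBC i)
  le_antisymm A B hAB hBA :=
    Subtype.ext (funext fun i => Finset.Subset.antisymm (hAB i) (hBA i))

instance (r : ℕ) [NeZero r] {V : Type*} [Fintype V] [DecidableEq V]
    (H : SimpleGraph V) [DecidableRel H.Adj] : Fintype (KrHom r H) := by
  unfold KrHom; infer_instance

/-- The cyclic-shift action of `k : ℤ_r` on `Hom_p(K_r, H)`: `(k • A)_j = A_{j+k}`. -/
def shiftK (r : ℕ) {V : Type*} [DecidableEq V] {H : SimpleGraph V} (k : ZMod r)
    (A : KrHom r H) : KrHom r H :=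
  ⟨fun j => A.val (j + k),
    ⟨fun j => A.prop.1 (j + k),
     fun i j hij x hx y hy =>
       A.prop.2 (i + k) (j + k) (fun h => hij (by simpa using add_right_cancel h))
         x hx y hy⟩⟩

/-- Vertex set of the join `(ℤ_r)^{*m}`, ordered by `(g, x) ≺₁ (h, y)` iff `x < y`;
its realization is an `E_{m-1}ℤ_r` space. -/
structure JoinVertexZ (r m : ℕ) where
  g : ZMod r
  i : Fin m

instance (r m : ℕ) : PartialOrder (JoinVertexZ r m) where
  le a b := a = b ∨ a.i < b.i
  le_refl a := Or.inl rfl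
  le_trans a b c hab hbc := by
    rcases hab with rfl | h
    · exact hbc
    · rcases hbc with rfl | h'
      · exact Or.inr h
      · exact Or.inr (h.trans h')
  le_antisymm a b hab hba := by
    rcases hab with rfl | h
    · rfl
    · rcases hba with rfl | h'
      · rfl
      · exact absurd h' (lt_asymm h)

instance (r m : ℕ) [NeZero r] : Fintype (JoinVertexZ r m) :=
  Fintype.ofEquiv (ZMod r × Fin m)
    ⟨fun p => ⟨p.1, p.2⟩, fun v => (v.g, v.i), fun _ => rfl, fun _ => rfl⟩

/-- The `ℤ_r`-index of `‖Hom(K_r, H)‖ = ‖Δ(Hom_p(K_r, H))‖`: the least `n` admitting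
a continuous `ℤ_r`-equivariant map to the `E_nℤ_r` space `‖Δ(ℤ_r × [n+1])‖`. -/
noncomputable def indZr (r : ℕ) [NeZero r] {V : Type*} [Fintype V] [DecidableEq V]
    (H : SimpleGraph V) [DecidableRel H.Adj] : ℕ :=
  sInf {n : ℕ | ∃ Φ : Realization (KrHom r H) → Realization (JoinVertexZ r (n + 1)),
    Continuous Φ ∧
    ∀ (k : ZMod r) (x y : Realization (KrHom r H)),
      (∀ q : KrHom r H, y.val q = x.val (shiftK r (-k) q)) →
      ∀ p : JoinVertexZ r (n + 1), (Φ y).val p = (Φ x).val ⟨p.g - k, p.i⟩}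

/-!
Grade a tuple `A ∈ Hom_p(K_r, H)` by its level `∑ⱼ (min(|Aⱼ|, t) - 1)`. Since `H` has no
`K_{t,…,t}`, some coordinate of `A` has fewer than `t` vertices, so the level is below `r(t-1)`.
Along a comparable pair of equal level the coordinates with fewer than `t` vertices cannot change,
and this pattern of small coordinates is moved by every nontrivial cyclic shift (two coordinates of
`A` are disjoint). Hence the shift acts freely on patterns, which yields an equivariant colour
`A ↦ g(A) ∈ ℤ_r` constant on patterns. Then `A ↦ (g(A), level(A))` is a monotone equivariant map
into `(ℤ_r)^{*r(t-1)}`, so the index is at most `r(t-1) - 1 ≤ (C(r,2) + 1)(t-1) - 1`.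
-/

open Finset

namespace AddAction

variable {G X : Type*} [AddGroup G] [AddAction G X]

theorem exists_equivariant_of_free (hfree : ∀ (k : G) (a : X), k +ᵥ a = a → k = 0) :
    ∃ g : X → G, ∀ k a, g (k +ᵥ a) = k + g a := by
  let rep : X → X := fun a => (Quotient.mk (orbitRel G X) a).out
  have hrep : ∀ a, ∃ k : G, k +ᵥ rep a = a := fun a =>
    mem_orbit_iff.1 (mem_orbit_symm.1
      (Quotient.exact (Quotient.out_eq (Quotient.mk (orbitRel G X) a))))
  choose g hg using hrep
  refine ⟨g, fun k a => ?_⟩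
  have hrep_vadd : rep (k +ᵥ a) = rep a :=
    congrArg Quotient.out (Quotient.sound (mem_orbit a k))
  have hsame : g (k +ᵥ a) +ᵥ rep a = (k + g a) +ᵥ rep a := by
    rw [add_vadd, hg a, ← hrep_vadd, hg]
  have := hfree (-(k + g a) + g (k +ᵥ a)) (rep a) <| by rw [add_vadd, hsame, neg_vadd_vadd]
  rwa [neg_add_eq_zero, eq_comm] at this

theorem exists_equivariant_of_free_quotient (R : Setoid X)
    (hR : ∀ (k : G) (a b : X), R a b → R (k +ᵥ a) (k +ᵥ b))
    (hfree : ∀ (k : G) (a : X), R (k +ᵥ a) a → k = 0) :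
    ∃ g : X → G, (∀ a b, R a b → g a = g b) ∧ ∀ k a, g (k +ᵥ a) = k + g a := by
  let : AddAction G (Quotient R) :=
    { vadd k := Quotient.map (k +ᵥ ·) (hR k)
      zero_vadd q := by induction q using Quotient.ind; exact congrArg _ (zero_vadd G _)
      add_vadd k k' q := by induction q using Quotient.ind; exact congrArg _ (add_vadd k k' _) }
  obtain ⟨g, hg⟩ := exists_equivariant_of_free (G := G) (X := Quotient R)
    fun k q => by
      induction q using Quotient.ind
      exact fun h => hfree k _ (Quotient.exact h)
  exact ⟨g ∘ Quotient.mk R, fun a b h => congrArg g (Quotient.sound h), fun k a => hg k ⟦a⟧⟩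

end AddAction

namespace Realization

variable {P Q : Type*} [PartialOrder P] [Fintype P] [PartialOrder Q] [Fintype Q] [DecidableEq Q]

def map (f : P → Q) (hf : Monotone f) (w : Realization P) : Realization Q :=
  ⟨fun p => ∑ q, if f q = p then w.val q else 0,
    fun p => sum_nonneg fun q _ => by split_ifs <;> simp [w.prop.1 q],
    by rw [sum_comm]; simpa using w.prop.2.1,
    by
      refine (w.prop.2.2.image_of_map_rel _ _ f fun _ _ h => hf h).mono fun p hp => ?_
      obtain ⟨q, -, hq⟩ := exists_ne_zero_of_sum_ne_zero hp
      obtain ⟨rfl, hw⟩ := ite_ne_right_iff.1 hq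
      exact ⟨q, hw, rfl⟩⟩

theorem continuous_map (f : P → Q) (hf : Monotone f) : Continuous (map f hf) :=
  Continuous.subtype_mk (continuous_pi fun _ => continuous_finsetSum _ fun q _ =>
    continuous_if_const _ (fun _ => (continuous_apply q).comp continuous_subtype_val)
      fun _ => continuous_const) _

theorem map_val_of_comp_symm (f : P → Q) (hf : Monotone f) (σ : P ≃ P) (τ : Q ≃ Q)
    (hfστ : ∀ q, f (σ q) = τ (f q)) {x y : Realization P}
    (hxy : ∀ q, y.val q = x.val (σ.symm q)) (p : Q) :
    (map f hf y).val p = (map f hf x).val (τ.symm p) := by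
  simp only [map, hxy]
  rw [← σ.sum_comp]
  simp only [hfστ, σ.symm_apply_apply, ← τ.eq_symm_apply]

end Realization

namespace SimpleGraph

variable {V : Type*} (H : SimpleGraph V)

def ContainsCompleteMultipartite (r t : ℕ) : Prop :=
  ∃ U : Fin r → Finset V,
    (∀ i, #(U i) = t) ∧
    (∀ i j, i ≠ j → Disjoint (U i) (U j)) ∧
    (∀ i j, i ≠ j → ∀ x ∈ U i, ∀ y ∈ U j, H.Adj x y)

end SimpleGraph

namespace KrHom

variable {r : ℕ} {V : Type*} [DecidableEq V] {H : SimpleGraph V}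

instance : AddAction (ZMod r) (KrHom r H) where
  vadd := shiftK r
  zero_vadd A := Subtype.ext <| funext fun j => congrArg A.val (add_zero j)
  add_vadd k k' A := Subtype.ext <| funext fun j => congrArg A.val (add_assoc j k k').symm

theorem vadd_val (k : ZMod r) (A : KrHom r H) (j : ZMod r) : (k +ᵥ A).val j = A.val (j + k) :=
  rfl

theorem disjoint_val (A : KrHom r H) {i j : ZMod r} (hij : i ≠ j) :
    Disjoint (A.val i) (A.val j) :=
  disjoint_left.2 fun x hi hj => H.loopless.irrefl x (A.prop.2 i j hij x hi x hj)

theorem containsCompleteMultipartite_of_le_card [NeZero r] (A : KrHom r H) {t : ℕ}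
    (h : ∀ j, t ≤ #(A.val j)) : H.ContainsCompleteMultipartite r t := by
  choose U hUA hU using fun j => exists_subset_card_eq (h j)
  have he := (ZMod.finEquiv r).injective
  exact ⟨fun i => U (ZMod.finEquiv r i), fun i => hU _,
    fun i j hij => (A.disjoint_val (he.ne hij)).mono (hUA _) (hUA _),
    fun i j hij x hx y hy => A.prop.2 _ _ (he.ne hij) x (hUA _ hx) y (hUA _ hy)⟩

variable {t : ℕ}

def pattern (t : ℕ) (A : KrHom r H) (j : ZMod r) : Option (Finset V) :=
  if #(A.val j) < t then some (A.val j) else none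

theorem eq_zero_of_pattern_vadd_eq {k : ZMod r} {A : KrHom r H} (hA : ∃ j, #(A.val j) < t)
    (h : pattern t (k +ᵥ A) = pattern t A) : k = 0 := by
  obtain ⟨j, hj⟩ := hA
  have hjk : A.val (j + k) = A.val j := by
    have := congrFun h j
    by_cases hc : #(A.val (j + k)) < t <;> simp [pattern, vadd_val, hj, hc] at this
    exact this
  by_contra hk
  have hdisj := A.disjoint_val (i := j + k) (j := j) (by simpa using hk)
  rw [hjk, disjoint_self, bot_eq_empty] at hdisj
  exact (A.prop.1 j).ne_empty hdisj

theorem min_card_sub_one_le {A B : KrHom r H} (h : A ≤ B) (j : ZMod r) :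
    min #(A.val j) t - 1 ≤ min #(B.val j) t - 1 :=
  Nat.sub_le_sub_right (min_le_min_right t (card_le_card (h j))) 1

variable [NeZero r]

def level (t : ℕ) (A : KrHom r H) : ℕ := ∑ j, (min #(A.val j) t - 1)

theorem level_vadd (k : ZMod r) (A : KrHom r H) : level t (k +ᵥ A) = level t A :=
  Fintype.sum_equiv (Equiv.addRight k) _ _ fun _ => rfl

theorem level_mono : Monotone (level t : KrHom r H → ℕ) := fun _ _ h =>
  sum_le_sum fun j _ => min_card_sub_one_le h j

theorem level_lt {A : KrHom r H} (hA : ∃ j, #(A.val j) < t) : level t A < r * (t - 1) := by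
  obtain ⟨j₀, hj₀⟩ := hA
  have hpos := (A.prop.1 j₀).card_pos
  calc level t A < ∑ _j : ZMod r, (t - 1) :=
        sum_lt_sum (fun j _ => Nat.sub_le_sub_right (min_le_right _ _) 1)
          ⟨j₀, mem_univ _, by omega⟩
    _ = r * (t - 1) := by simp [ZMod.card]

theorem pattern_eq_of_le_of_level_eq {A B : KrHom r H} (h : A ≤ B)
    (hl : level t A = level t B) : pattern t A = pattern t B := by
  have hterm := (sum_eq_sum_iff_of_le fun j _ => min_card_sub_one_le h j).1 hl
  funext j
  have hpos := (A.prop.1 j).card_pos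
  have hcard := card_le_card (h j)
  have hj := hterm j (mem_univ j)
  by_cases hA : #(A.val j) < t
  · have hB : #(B.val j) = #(A.val j) := by omega
    simp [pattern, hA, hB, eq_of_subset_of_card_le (h j) hB.le]
  · simp [pattern, hA, show ¬ #(B.val j) < t by omega]

theorem exists_monotone_equivariant_join {m : ℕ} (hH : ¬ H.ContainsCompleteMultipartite r t)
    (hm : r * (t - 1) ≤ m) :
    ∃ f : KrHom r H → JoinVertexZ r m,
      Monotone f ∧ ∀ k A, f (k +ᵥ A) = ⟨(f A).g + k, (f A).i⟩ := by
  have hsmall : ∀ A : KrHom r H, ∃ j, #(A.val j) < t := fun A => by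
    by_contra! h
    exact hH (A.containsCompleteMultipartite_of_le_card h)
  obtain ⟨g, hg_pattern, hg_vadd⟩ :=
    AddAction.exists_equivariant_of_free_quotient (G := ZMod r) (Setoid.ker (pattern t))
      (fun k _ _ h => funext fun j => congrFun h (j + k))
      (fun _ A h => eq_zero_of_pattern_vadd_eq (hsmall A) h)
  refine ⟨fun A => ⟨g A, level t A, (level_lt (hsmall A)).trans_le hm⟩, fun A B h => ?_,
    fun k A => ?_⟩
  · rcases (level_mono (t := t) h).eq_or_lt with hl | hl
    · left
      simp only [hg_pattern A B (pattern_eq_of_le_of_level_eq h hl), hl]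
    · exact Or.inr hl
  · simp [hg_vadd, level_vadd, add_comm]

end KrHom

theorem indZr_le_of_monotone_equivariant {r : ℕ} [NeZero r] {V : Type*} [Fintype V]
    [DecidableEq V] {H : SimpleGraph V} [DecidableRel H.Adj] {n : ℕ}
    (f : KrHom r H → JoinVertexZ r (n + 1)) (hf : Monotone f)
    (hfk : ∀ (k : ZMod r) A, f (k +ᵥ A) = ⟨(f A).g + k, (f A).i⟩) : indZr r H ≤ n := by
  classical
  let τ (k : ZMod r) : JoinVertexZ r (n + 1) ≃ JoinVertexZ r (n + 1) :=
    ⟨fun v => ⟨v.g + k, v.i⟩, fun v => ⟨v.g - k, v.i⟩, fun _ => by simp, fun _ => by simp⟩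
  exact Nat.sInf_le ⟨Realization.map f hf, Realization.continuous_map f hf,
    fun k _ _ hxy => Realization.map_val_of_comp_symm f hf (AddAction.toPerm k) (τ k) (hfk k) hxy⟩

theorem indZr_le_of_not_containsCompleteMultipartite {r : ℕ} [NeZero r] {V : Type*} [Fintype V]
    [DecidableEq V] {H : SimpleGraph V} [DecidableRel H.Adj] {t : ℕ}
    (hH : ¬ H.ContainsCompleteMultipartite r t) : indZr r H ≤ r * (t - 1) - 1 := by
  obtain ⟨f, hf, hfk⟩ := KrHom.exists_monotone_equivariant_join hH le_tsub_add
  exact indZr_le_of_monotone_equivariant f hf hfk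

theorem Nat.le_choose_two_add_one : ∀ r : ℕ, r ≤ r.choose 2 + 1
  | 0 => zero_le_one
  | r + 1 => by rw [Nat.choose_succ_succ', Nat.choose_one_right]; omega

theorem indZr_hom_le_general
    (r : ℕ) [NeZero r] {V : Type*} [Fintype V] [DecidableEq V]
    (H : SimpleGraph V) [DecidableRel H.Adj] (t : ℕ)
    (hH : ¬ ∃ U : Fin r → Finset V,
      (∀ i, (U i).card = t) ∧
      (∀ i j, i ≠ j → Disjoint (U i) (U j)) ∧
      (∀ i j, i ≠ j → ∀ x ∈ U i, ∀ y ∈ U j, H.Adj x y)) :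
    indZr r H ≤ (Nat.choose r 2 + 1) * (t - 1) - 1 :=
  (indZr_le_of_not_containsCompleteMultipartite hH).trans <|
    Nat.sub_le_sub_right (Nat.mul_le_mul_right _ (Nat.le_choose_two_add_one r)) 1

/-- If `H` contains no complete `r`-partite subgraph `K_{t,…,t}`, then
`ind_{ℤ_r} ‖Hom(K_r, H)‖ ≤ (C(r,2) + 1)(t - 1) - 1`. -/
theorem indZr_hom_le
    (r : ℕ) (hr : 2 ≤ r) [NeZero r] {V : Type*} [Fintype V] [DecidableEq V]
    (H : SimpleGraph V) [DecidableRel H.Adj] (t : ℕ)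
    (hH : ¬ ∃ U : Fin r → Finset V,
      (∀ i, (U i).card = t) ∧
      (∀ i j, i ≠ j → Disjoint (U i) (U j)) ∧
      (∀ i j, i ≠ j → ∀ x ∈ U i, ∀ y ∈ U j, H.Adj x y)) :
    indZr r H ≤ (Nat.choose r 2 + 1) * (t - 1) - 1 :=
  indZr_hom_le_general r H t hH
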